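/- arXiv:2409.01153 — 2 statements merged into one kernel-verified Lean document; each statement's English description precedes it below -/
import Mathlib

section
/- Let ξ be an n×n̄ complex matrix with blocks ξ₁ (the top n̄×n̄ block) and ξ₂ (the bottom (n−n̄)×n̄ block). If Re(trace(Π σ ξ)) = 0 for all anti-Hermitian σ ∈ u(n), where Π = [I_{n̄} 0], then ξ₂ = 0. -/
open Matrix

/-!
Take `σ = [[0, ξ₂ᴴ], [-ξ₂, 0]]`, which is anti-Hermitian. Then `Π σ ξ = ξ₂ᴴ ξ₂`, whose trace is
the squared Frobenius norm of `ξ₂`; it is real, so its vanishing real part forces `ξ₂ = 0`.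
-/

namespace Matrix

variable {m n : Type*}

open scoped ComplexOrder in
theorem eq_zero_of_re_trace_conjTranspose_mul_self_eq_zero [Fintype m] [Fintype n]
    {𝕜 : Type*} [RCLike 𝕜] {A : Matrix m n 𝕜} (h : RCLike.re (Aᴴ * A).trace = 0) : A = 0 := by
  have him := (RCLike.nonneg_iff.mp (posSemidef_conjTranspose_mul_self A).trace_nonneg).2
  exact trace_conjTranspose_mul_self_eq_zero_iff.mp
    (RCLike.ext (by simpa using h) (by simpa using him))

theorem conjTranspose_fromBlocks_zero_neg_conjTranspose {α : Type*} [AddGroup α]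
    [StarAddMonoid α] (B : Matrix m n α) :
    (fromBlocks 0 B (-Bᴴ) 0)ᴴ = -fromBlocks 0 B (-Bᴴ) 0 := by
  simp [fromBlocks_conjTranspose, fromBlocks_neg]

theorem fromCols_one_zero_mul_fromBlocks_mul_fromRows {l : Type*} [Fintype m] [Fintype n]
    [DecidableEq m] {α : Type*} [Semiring α] (A : Matrix m m α) (B : Matrix m n α)
    (C : Matrix n m α) (D : Matrix n n α) (X : Matrix m l α) (Y : Matrix n l α) :
    (fromCols 1 0 : Matrix m (m ⊕ n) α) * fromBlocks A B C D * fromRows X Y = A * X + B * Y := by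
  simp [fromCols_mul_fromBlocks, fromCols_mul_fromRows]

end Matrix

/-- If `Re(trace(Π σ ξ)) = 0` for all anti-Hermitian `σ`, where
`Π = [I_{n̄} 0]` and `ξ` has top block `ξ₁` and bottom block `ξ₂`,
then `ξ₂ = 0`. -/
theorem critical_point_lower_block_zero (nbar k : ℕ)
    (ξ₁ : Matrix (Fin nbar) (Fin nbar) ℂ)
    (ξ₂ : Matrix (Fin k) (Fin nbar) ℂ)
    (ξ : Matrix (Fin nbar ⊕ Fin k) (Fin nbar) ℂ)
    (hξ : ξ = Matrix.fromRows ξ₁ ξ₂)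
    (P : Matrix (Fin nbar) (Fin nbar ⊕ Fin k) ℂ)
    (hP : P = Matrix.fromCols 1 0)
    (hcrit : ∀ σ : Matrix (Fin nbar ⊕ Fin k) (Fin nbar ⊕ Fin k) ℂ,
      σᴴ = -σ → (Matrix.trace (P * σ * ξ)).re = 0) :
    ξ₂ = 0 := by
  subst hξ hP
  have h := hcrit _ (conjTranspose_fromBlocks_zero_neg_conjTranspose ξ₂ᴴ)
  rw [fromCols_one_zero_mul_fromBlocks_mul_fromRows, Matrix.zero_mul, zero_add] at h
  exact eq_zero_of_re_trace_conjTranspose_mul_self_eq_zero h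
end

section
/- Let A be a block-diagonal square complex matrix A = diag(A₁, I_k), where A₁ is m×m and I_k is the k×k identity. If H₁ is a unitary m×m matrix minimizing ‖H₁ − A₁‖ over U(m), then H = diag(H₁, I_k) minimizes ‖H − A‖ over all unitary (m+k)×(m+k) matrices, where ‖·‖ is the Frobenius norm. -/
/-!
A unitary `H` minimizes `‖H - A‖` iff it maximizes `Re tr (Aᴴ H)`, and this happens iff `Aᴴ H` is
positive semidefinite, i.e. iff `H` is a unitary polar factor of `A`. Indeed, if `Aᴴ H ≥ 0` then
`Re tr (Aᴴ H W) ≤ tr (Aᴴ H)` for every unitary `W`; conversely, multiplying `H` by a phase along a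
single vector shows that the quadratic form of `Aᴴ H` is nonnegative. For the block matrices,
`Aᴴ H = diag(A₁ᴴ H₁, I_k)` is positive semidefinite as soon as `A₁ᴴ H₁` is.
-/

open Matrix

/-- Frobenius norm of a complex matrix: ‖A‖ = sqrt(Re trace(Aᴴ A)). -/
noncomputable def frobNorm {m n : Type*} [Fintype m] [Fintype n]
    (A : Matrix m n ℂ) : ℝ :=
  Real.sqrt (Matrix.trace (Aᴴ * A)).re

open scoped ComplexOrder

lemma Complex.nonneg_of_forall_re_mul_le {w : ℂ} (h : ∀ c : ℂ, ‖c‖ = 1 → (c * w).re ≤ w.re) :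
    0 ≤ w := by
  rcases eq_or_ne w 0 with rfl | hw
  · exact le_rfl
  have hnorm : ‖w‖ ≠ 0 := norm_ne_zero_iff.mpr hw
  have hc : ‖(starRingEnd ℂ w) / ‖w‖‖ = 1 := by
    rw [norm_div, Complex.norm_conj, Complex.norm_real, norm_norm, div_self hnorm]
  have hle := h _ hc
  rw [div_mul_eq_mul_div, Complex.conj_mul', ← Complex.ofReal_pow, ← Complex.ofReal_div,
    Complex.ofReal_re, sq, mul_div_assoc, div_self hnorm, mul_one] at hle
  exact Complex.re_eq_norm.mp (le_antisymm (Complex.re_le_norm w) hle)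

lemma IsStarProjection.one_add_smul_mem_unitary {A : Type*} [Ring A] [StarRing A] [Algebra ℂ A]
    [StarModule ℂ A] {p : A} (hp : IsStarProjection p) {c : ℂ} (hc : ‖c‖ = 1) :
    1 + (c - 1) • p ∈ unitary A := by
  have hcc : star c * c = 1 := by
    rw [Complex.star_def, Complex.conj_mul', hc]; norm_num
  have hstar : star (1 + (c - 1) • p) = 1 + (star c - 1) • p := by
    rw [star_add, star_one, star_smul, hp.isSelfAdjoint.star_eq, star_sub, star_one]
  have key : ∀ a b : ℂ, a * b = 1 → (1 + (a - 1) • p) * (1 + (b - 1) • p) = 1 := by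
    intro a b hab
    rw [add_mul, one_mul, mul_add, mul_one, smul_mul_smul_comm, hp.isIdempotentElem.eq,
      add_assoc, ← add_smul, ← add_smul,
      show b - 1 + (a - 1 + (a - 1) * (b - 1)) = a * b - 1 by ring, hab, sub_self, zero_smul,
      add_zero]
  rw [Unitary.mem_iff, hstar]
  exact ⟨key _ _ hcc, key _ _ (by rw [mul_comm, hcc])⟩

namespace Matrix

variable {n p : Type*} [Fintype n] [Fintype p]

lemma PosSemidef.fromBlocks_zero {R : Type*} [Ring R] [PartialOrder R] [StarRing R]
    [AddLeftMono R] {A : Matrix n n R} {D : Matrix p p R} (hA : A.PosSemidef)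
    (hD : D.PosSemidef) : (fromBlocks A 0 0 D).PosSemidef := by
  rw [posSemidef_iff_dotProduct_mulVec] at hA hD ⊢
  refine ⟨hA.1.fromBlocks (by simp) hD.1, fun x => ?_⟩
  rw [fromBlocks_mulVec, dotProduct_block]
  simp only [Sum.elim_comp_inl, Sum.elim_comp_inr, zero_mulVec, add_zero, zero_add]
  exact add_nonneg (hA.2 (x ∘ Sum.inl)) (hD.2 (x ∘ Sum.inr))

lemma isStarProjection_inv_smul_vecMulVec {𝕜 : Type*} [RCLike 𝕜] (x : n → 𝕜) :
    IsStarProjection ((star x ⬝ᵥ x)⁻¹ • vecMulVec x (star x)) := by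
  refine ⟨?_, ?_⟩
  · rw [IsIdempotentElem, smul_mul_smul_comm, vecMulVec_mul_vecMulVec, vecMulVec_smul, smul_smul]
    congr 1
    grind
  · rw [IsSelfAdjoint, star_smul, star_inv₀, (dotProduct_star_self_nonneg x).isSelfAdjoint.star_eq,
      star_eq_conjTranspose, conjTranspose_vecMulVec, star_star]

variable [DecidableEq n] [DecidableEq p]

lemma fromBlocks_mem_unitaryGroup {α : Type*} [CommRing α] [StarRing α]
    {U : Matrix n n α} {V : Matrix p p α} (hU : U ∈ unitaryGroup n α)
    (hV : V ∈ unitaryGroup p α) : fromBlocks U 0 0 V ∈ unitaryGroup (n ⊕ p) α := by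
  rw [mem_unitaryGroup_iff, star_eq_conjTranspose, fromBlocks_conjTranspose,
    fromBlocks_multiply]
  simp [← star_eq_conjTranspose, mem_unitaryGroup_iff.mp hU, mem_unitaryGroup_iff.mp hV]

lemma PosSemidef.re_trace_mul_le {𝕜 : Type*} [RCLike 𝕜] {X W : Matrix n n 𝕜}
    (hX : X.PosSemidef) (hW : W ∈ unitaryGroup n 𝕜) :
    RCLike.re (X * W).trace ≤ RCLike.re X.trace := by
  have hWW : W * Wᴴ = 1 := mem_unitaryGroup_iff.mp hW
  have hexpand : ((1 - W)ᴴ * X * (1 - W)).trace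
      = 2 * X.trace - (X * W).trace - star (X * W).trace := by
    have h1 : (Wᴴ * X * W).trace = X.trace := by
      rw [Matrix.mul_assoc, trace_mul_comm, Matrix.mul_assoc, hWW, Matrix.mul_one]
    have h2 : (Wᴴ * X).trace = star (X * W).trace := by
      rw [← trace_conjTranspose, conjTranspose_mul, hX.1.eq]
    simp only [conjTranspose_sub, conjTranspose_one, Matrix.sub_mul, Matrix.mul_sub,
      Matrix.one_mul, Matrix.mul_one, trace_sub, h1, h2]
    ring
  have hnonneg : 0 ≤ RCLike.re ((1 - W)ᴴ * X * (1 - W)).trace :=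
    (RCLike.nonneg_iff.mp (hX.conjTranspose_mul_mul_same (1 - W)).trace_nonneg).1
  rw [hexpand] at hnonneg
  simp only [map_sub, RCLike.star_def, RCLike.conj_re, RCLike.mul_re, RCLike.ofNat_re,
    RCLike.ofNat_im, zero_mul, sub_zero] at hnonneg
  linarith

lemma posSemidef_of_forall_dotProduct_mulVec_nonneg {X : Matrix n n ℂ}
    (h : ∀ x, 0 ≤ star x ⬝ᵥ (X *ᵥ x)) : X.PosSemidef := by
  rw [← isPositive_toEuclideanLin_iff, LinearMap.isPositive_iff_complex]
  intro x
  have hx := h x.ofLp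
  have hinner : x.ofLp ⬝ᵥ star (X *ᵥ x.ofLp) = star x.ofLp ⬝ᵥ (X *ᵥ x.ofLp) := by
    rw [dotProduct_comm, star_dotProduct, hx.isSelfAdjoint.star_eq]
  simp only [EuclideanSpace.inner_eq_star_dotProduct, RCLike.re_to_complex]
  rw [show (toEuclideanLin X x).ofLp = X *ᵥ x.ofLp from rfl, hinner]
  exact ⟨Complex.conj_eq_iff_re.mp hx.isSelfAdjoint.star_eq, (Complex.nonneg_iff.mp hx).1⟩

/-- Testing `h` on `W = 1 + (c - 1) P`, with `P` the projection onto `ℂ x` and `‖c‖ = 1`, gives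
`Re ((c - 1) w) ≤ 0` for `w = xᴴ X x / xᴴ x`, which forces `w ≥ 0`. -/
lemma posSemidef_of_forall_re_trace_mul_le {X : Matrix n n ℂ}
    (h : ∀ W ∈ unitaryGroup n ℂ, (X * W).trace.re ≤ X.trace.re) : X.PosSemidef := by
  refine posSemidef_of_forall_dotProduct_mulVec_nonneg fun x => ?_
  rcases eq_or_ne x 0 with rfl | hx
  · simp
  set s := star x ⬝ᵥ x
  set z := star x ⬝ᵥ (X *ᵥ x)
  have htrace (c : ℂ) : (X * (1 + (c - 1) • (s⁻¹ • vecMulVec x (star x)))).trace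
      = X.trace + c * (s⁻¹ * z) - s⁻¹ * z := by
    rw [Matrix.mul_add, Matrix.mul_one, mul_smul_comm, mul_smul_comm, mul_vecMulVec, trace_add,
      trace_smul, trace_smul, trace_vecMulVec, dotProduct_comm, smul_eq_mul, smul_eq_mul]
    ring
  have hw : 0 ≤ s⁻¹ * z := Complex.nonneg_of_forall_re_mul_le fun c hc => by
    have := h _ ((isStarProjection_inv_smul_vecMulVec x).one_add_smul_mem_unitary hc)
    rw [htrace, Complex.sub_re, Complex.add_re] at this
    linarith
  have hs : 0 < s := dotProduct_star_self_pos_iff.mpr hx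
  rw [← mul_inv_cancel_left₀ hs.ne' z]
  exact mul_nonneg hs.le hw

end Matrix

section ClosestUnitary

variable {n : Type*} [Fintype n] [DecidableEq n]

def IsClosestUnitary (A H : Matrix n n ℂ) : Prop :=
  H ∈ unitaryGroup n ℂ ∧ ∀ K ∈ unitaryGroup n ℂ, frobNorm (H - A) ≤ frobNorm (K - A)

lemma re_trace_conjTranspose_sub_mul_sub {K : Matrix n n ℂ} (A : Matrix n n ℂ)
    (hK : K ∈ unitaryGroup n ℂ) :
    ((K - A)ᴴ * (K - A)).trace.re
      = Fintype.card n - 2 * (Aᴴ * K).trace.re + (Aᴴ * A).trace.re := by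
  have hKK : Kᴴ * K = 1 := mem_unitaryGroup_iff'.mp hK
  have hKA : (Kᴴ * A).trace = star (Aᴴ * K).trace := by
    rw [← trace_conjTranspose, conjTranspose_mul, conjTranspose_conjTranspose]
  rw [conjTranspose_sub, Matrix.sub_mul, Matrix.mul_sub, Matrix.mul_sub, hKK]
  simp only [trace_sub, trace_one, hKA, Complex.sub_re, Complex.natCast_re, Complex.star_def,
    Complex.conj_re]
  ring

lemma frobNorm_sub_le_frobNorm_sub_iff {A H K : Matrix n n ℂ} (hH : H ∈ unitaryGroup n ℂ)
    (hK : K ∈ unitaryGroup n ℂ) :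
    frobNorm (H - A) ≤ frobNorm (K - A) ↔ (Aᴴ * K).trace.re ≤ (Aᴴ * H).trace.re := by
  have hnonneg : 0 ≤ ((K - A)ᴴ * (K - A)).trace.re :=
    (Complex.nonneg_iff.mp (posSemidef_conjTranspose_mul_self (K - A)).trace_nonneg).1
  rw [frobNorm, frobNorm, Real.sqrt_le_sqrt_iff hnonneg, re_trace_conjTranspose_sub_mul_sub A hH,
    re_trace_conjTranspose_sub_mul_sub A hK]
  constructor <;> intro h <;> linarith

lemma isClosestUnitary_iff {A H : Matrix n n ℂ} :
    IsClosestUnitary A H ↔ H ∈ unitaryGroup n ℂ ∧ (Aᴴ * H).PosSemidef := by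
  refine and_congr_right fun hH => ⟨fun hmin => ?_, fun hpsd K hK => ?_⟩
  · refine posSemidef_of_forall_re_trace_mul_le fun W hW => ?_
    rw [Matrix.mul_assoc]
    exact (frobNorm_sub_le_frobNorm_sub_iff hH (mul_mem hH hW)).mp (hmin _ (mul_mem hH hW))
  · refine (frobNorm_sub_le_frobNorm_sub_iff hH hK).mpr ?_
    have hHH : H * Hᴴ = 1 := mem_unitaryGroup_iff.mp hH
    have := hpsd.re_trace_mul_le (mul_mem (Unitary.star_mem hH) hK)
    rwa [star_eq_conjTranspose, ← Matrix.mul_assoc, Matrix.mul_assoc Aᴴ, hHH,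
      Matrix.mul_one] at this

end ClosestUnitary

/-- For `A = diag(A₁, I_k)`: if `H₁` is a closest unitary matrix to `A₁`, then
`H = diag(H₁, I_k)` is a closest unitary matrix to `A`. -/
theorem closest_unitary_block_diag (m k : ℕ)
    (A₁ : Matrix (Fin m) (Fin m) ℂ)
    (A : Matrix (Fin m ⊕ Fin k) (Fin m ⊕ Fin k) ℂ)
    (hA : A = Matrix.fromBlocks A₁ 0 0 (1 : Matrix (Fin k) (Fin k) ℂ))
    (H₁ : Matrix (Fin m) (Fin m) ℂ)
    (hH₁ : H₁ ∈ Matrix.unitaryGroup (Fin m) ℂ)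
    (hmin₁ : ∀ K ∈ Matrix.unitaryGroup (Fin m) ℂ,
      frobNorm (H₁ - A₁) ≤ frobNorm (K - A₁))
    (H : Matrix (Fin m ⊕ Fin k) (Fin m ⊕ Fin k) ℂ)
    (hH : H = Matrix.fromBlocks H₁ 0 0 (1 : Matrix (Fin k) (Fin k) ℂ)) :
    H ∈ Matrix.unitaryGroup (Fin m ⊕ Fin k) ℂ ∧
      ∀ K ∈ Matrix.unitaryGroup (Fin m ⊕ Fin k) ℂ,
        frobNorm (H - A) ≤ frobNorm (K - A) := by
  obtain ⟨-, hpsd₁⟩ := isClosestUnitary_iff.mp ⟨hH₁, hmin₁⟩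
  have hAH : Aᴴ * H = fromBlocks (A₁ᴴ * H₁) 0 0 1 := by
    simp [hA, hH, fromBlocks_conjTranspose, fromBlocks_multiply]
  refine isClosestUnitary_iff.mpr ⟨?_, ?_⟩
  · rw [hH]
    exact fromBlocks_mem_unitaryGroup hH₁ (one_mem _)
  · rw [hAH]
    exact hpsd₁.fromBlocks_zero PosSemidef.one
end
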